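/- Let b, b₁, C > 0 and let γ be the three-fold product of gaussianReal 0 1 on ℝ³. Let μ be the pushforward of γ under (e₁, e₂, e₃) ↦ (e₁, C·e₁ + e₂, (b + C·b₁)·e₁ + b₁·e₂ + e₃) (the law of (X, Y, Z) for the triangle DAG X → Y with weight C, X → Z with weight b, Y → Z with weight b₁, unit-variance noise), and let ν be the pushforward of γ under (e₁, e₂, e₃) ↦ (e₁, C·e₁ + e₂, c·(C·e₁ + e₂) + e₃) with c = b₁ + C·b/(1 + C²) (the law of (X', Y', Z') for the chain DAG X' → Y' with weight C, Y' → Z' with weight c, unit-variance noise). Then the Kullback–Leibler divergence satisfies KL(μ ‖ ν) = b²/(2·(1 + C²)). -/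

import Mathlib

open MeasureTheory ProbabilityTheory Real
open scoped Classical ENNReal NNReal
open Filter


lemma gaussian_shift_density (r : ℝ) :
    gaussianReal r 1 = (gaussianReal 0 1).withDensity
      (fun x => ENNReal.ofReal (Real.exp (r * x - r ^ 2 / 2))) := by
  have h1 : gaussianPDF r 1 = gaussianPDF 0 1
      * fun x => ENNReal.ofReal (Real.exp (r * x - r ^ 2 / 2)) := by
    funext x
    rw [Pi.mul_apply, gaussianPDF_def, gaussianPDF_def,
      ← ENNReal.ofReal_mul (gaussianPDFReal_nonneg 0 1 x)]
    congr 1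
    simp only [gaussianPDFReal, NNReal.coe_one, mul_one, sub_zero]
    rw [mul_comm, mul_assoc, ← Real.exp_add]
    congr 1
    ring
  rw [gaussianReal_of_var_ne_zero _ one_ne_zero, h1,
      withDensity_mul _ (measurable_gaussianPDF 0 1) (by fun_prop),
      ← gaussianReal_of_var_ne_zero _ one_ne_zero]

lemma gaussian_shift_set (r : ℝ) {B : Set ℝ} (hB : MeasurableSet B) :
    gaussianReal 0 1 {z | z + r ∈ B}
      = ∫⁻ z in B, ENNReal.ofReal (Real.exp (r * z - r ^ 2 / 2)) ∂(gaussianReal 0 1) := by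
  have : {z : ℝ | z + r ∈ B} = (· + r) ⁻¹' B := rfl
  rw [this, ← Measure.map_apply (measurable_add_const r) hB, gaussianReal_map_add_const,
    zero_add, gaussian_shift_density, withDensity_apply _ hB]

lemma map_shear (m : ℝ × ℝ → ℝ) (hm : Measurable m) :
    Measure.map (fun p : ℝ × ℝ × ℝ => (p.1, p.2.1, p.2.2 + m (p.1, p.2.1)))
      ((gaussianReal 0 1).prod ((gaussianReal 0 1).prod (gaussianReal 0 1)))
    = ((gaussianReal 0 1).prod ((gaussianReal 0 1).prod (gaussianReal 0 1))).withDensity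
        (fun p => ENNReal.ofReal
          (Real.exp (m (p.1, p.2.1) * p.2.2 - m (p.1, p.2.1) ^ 2 / 2))) := by
  set g := gaussianReal 0 1 with hg
  have hS : Measurable (fun p : ℝ × ℝ × ℝ => (p.1, p.2.1, p.2.2 + m (p.1, p.2.1))) := by
    fun_prop
  have hw : Measurable (fun p : ℝ × ℝ × ℝ => ENNReal.ofReal
      (Real.exp (m (p.1, p.2.1) * p.2.2 - m (p.1, p.2.1) ^ 2 / 2))) := by fun_prop
  ext s hs
  rw [Measure.map_apply hS hs, withDensity_apply _ hs,
    ← lintegral_indicator hs _, lintegral_prod _ (hw.indicator hs).aemeasurable,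
    Measure.prod_apply (hS hs)]
  refine lintegral_congr fun x => ?_
  have hmeas : Measurable fun q : ℝ × ℝ => (s.indicator (fun p : ℝ × ℝ × ℝ =>
      ENNReal.ofReal (Real.exp (m (p.1, p.2.1) * p.2.2 - m (p.1, p.2.1) ^ 2 / 2)))) (x, q) :=
    (hw.indicator hs).comp measurable_prodMk_left
  rw [lintegral_prod _ hmeas.aemeasurable,
    Measure.prod_apply (measurable_prodMk_left (hS hs))]
  refine lintegral_congr fun y => ?_
  have hB : MeasurableSet {z : ℝ | (x, y, z) ∈ s} :=
    measurable_prodMk_left (measurable_prodMk_left hs)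
  have h1 : Prod.mk y ⁻¹' (Prod.mk x ⁻¹'
      ((fun p : ℝ × ℝ × ℝ => (p.1, p.2.1, p.2.2 + m (p.1, p.2.1))) ⁻¹' s))
      = {z : ℝ | z + m (x, y) ∈ {z : ℝ | (x, y, z) ∈ s}} := rfl
  rw [h1, gaussian_shift_set _ hB, ← lintegral_indicator hB _]
  refine lintegral_congr fun z => ?_
  by_cases hz : (x, y, z) ∈ s
  · simp [Set.indicator_of_mem, hz, Set.indicator_of_mem (show z ∈ {z | (x,y,z) ∈ s} from hz)]
  · simp [Set.indicator_of_notMem, hz, Set.indicator_of_notMem (show z ∉ {z | (x,y,z) ∈ s} from hz)]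

lemma hpdf01 : gaussianPDFReal 0 1 = fun x => (Real.sqrt (2*π))⁻¹ * Real.exp (-x^2/2) := by
  funext x
  simp [gaussianPDFReal]

lemma h_int1 : Integrable (fun x : ℝ => x * Real.exp (-x^2/2)) := by
  have h := integrable_mul_exp_neg_mul_sq (b := 1/2) (by norm_num)
  refine h.congr (Filter.EventuallyEq.of_eq ?_)
  funext x; ring_nf

lemma h_int2 : Integrable (fun x : ℝ => x^2 * Real.exp (-x^2/2)) := by
  have h := integrable_rpow_mul_exp_neg_mul_sq (b := 1/2) (by norm_num) (s := 2) (by norm_num)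
  refine h.congr (Filter.EventuallyEq.of_eq ?_)
  funext x
  rw [show (2:ℝ) = ((2:ℕ):ℝ) by norm_num, Real.rpow_natCast]
  ring_nf

lemma h_exp : Integrable (fun x : ℝ => Real.exp (-x^2/2)) := by
  have h := integrable_exp_neg_mul_sq (b := 1/2) (by norm_num)
  refine h.congr (Filter.EventuallyEq.of_eq ?_)
  funext x; ring_nf

lemma hasDeriv_negexp (x : ℝ) :
    HasDerivAt (fun y : ℝ => -Real.exp (-y^2/2)) (x * Real.exp (-x^2/2)) x := by
  have h1 : HasDerivAt (fun y : ℝ => -y^2/2) (-x) x := by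
    have h := ((hasDerivAt_pow 2 x).div_const 2).neg
    have heq : (-fun y : ℝ => (y^2/2)) = fun y : ℝ => -y^2/2 := by funext y; simp only [Pi.neg_apply]; ring
    rw [heq] at h
    refine h.congr_deriv ?_
    norm_num
  have h2 := h1.exp.neg
  refine h2.congr_deriv ?_
  ring

lemma hv1 : ∫ x : ℝ, x * Real.exp (-x^2/2) = 0 := by
  have := integral_mul_deriv_eq_deriv_mul_of_integrable
    (u := fun _ : ℝ => (1:ℝ)) (u' := fun _ => (0:ℝ))
    (v := fun y : ℝ => -Real.exp (-y^2/2)) (v' := fun x : ℝ => x * Real.exp (-x^2/2))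
    (fun x _ => hasDerivAt_const x (1:ℝ)) (fun x _ => hasDeriv_negexp x)
    (by simpa [Pi.mul_def] using h_int1)
    (by refine (integrable_zero _ _ _).congr (Filter.EventuallyEq.of_eq ?_)
        funext x; simp [Pi.mul_def])
    (by refine h_exp.neg.congr (Filter.EventuallyEq.of_eq ?_); funext x; simp [Pi.mul_def])
  simpa using this

lemma hv2 : ∫ x : ℝ, x^2 * Real.exp (-x^2/2) = Real.sqrt (2*π) := by
  have := integral_mul_deriv_eq_deriv_mul_of_integrable
    (u := fun y : ℝ => y) (u' := fun _ => (1:ℝ))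
    (v := fun y : ℝ => -Real.exp (-y^2/2)) (v' := fun x : ℝ => x * Real.exp (-x^2/2))
    (fun x _ => hasDerivAt_id x) (fun x _ => hasDeriv_negexp x)
    (by refine h_int2.congr (Filter.EventuallyEq.of_eq ?_); funext x; simp [Pi.mul_def]; ring)
    (by refine h_exp.neg.congr (Filter.EventuallyEq.of_eq ?_); funext x; simp [Pi.mul_def])
    (by refine h_int1.neg.congr (Filter.EventuallyEq.of_eq ?_); funext x; simp [Pi.mul_def])
  have h2 : ∫ x : ℝ, x^2 * Real.exp (-x^2/2) = ∫ x : ℝ, x * (x * Real.exp (-x^2/2)) := by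
    congr 1; funext x; ring
  rw [h2, this]
  have h5 : (∫ x : ℝ, (fun _ => (1:ℝ)) x * (fun y : ℝ => -Real.exp (-y^2/2)) x)
      = - ∫ x : ℝ, Real.exp (-(1/2) * x^2) := by
    rw [← integral_neg]
    congr 1
    funext x
    simp
    ring_nf
  rw [h5, neg_neg, integral_gaussian]
  congr 1
  ring

lemma gauss_integrable (f : ℝ → ℝ)
    (h : Integrable (fun x => f x * gaussianPDFReal 0 1 x) volume) :
    Integrable f (gaussianReal 0 1) := by
  rw [gaussianReal_of_var_ne_zero _ one_ne_zero,
    integrable_withDensity_iff (measurable_gaussianPDF 0 1)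
      (ae_of_all _ fun x => ENNReal.ofReal_lt_top)]
  refine h.congr (Filter.EventuallyEq.of_eq ?_)
  funext x
  rw [gaussianPDF_def, ENNReal.toReal_ofReal (gaussianPDFReal_nonneg 0 1 x)]

lemma gauss_integral (f : ℝ → ℝ) :
    ∫ x, f x ∂(gaussianReal 0 1) = ∫ x, gaussianPDFReal 0 1 x * f x := by
  rw [gaussianReal_of_var_ne_zero _ one_ne_zero]
  have h0 : gaussianPDF 0 1 = fun x => ((gaussianPDFReal 0 1 x).toNNReal : ℝ≥0∞) := rfl
  rw [h0, integral_withDensity_eq_integral_smul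
    ((measurable_gaussianPDFReal 0 1).real_toNNReal) f]
  refine integral_congr_ae (Filter.EventuallyEq.of_eq ?_)
  funext x
  simp [NNReal.smul_def, Real.coe_toNNReal _ (gaussianPDFReal_nonneg 0 1 x)]

lemma integrable_id_gauss : Integrable (fun x : ℝ => x) (gaussianReal 0 1) := by
  refine gauss_integrable _ ?_
  refine (h_int1.const_mul ((Real.sqrt (2*π))⁻¹)).congr (Filter.EventuallyEq.of_eq ?_)
  funext x
  rw [hpdf01]
  ring

lemma integrable_sq_gauss : Integrable (fun x : ℝ => x ^ 2) (gaussianReal 0 1) := by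
  refine gauss_integrable _ ?_
  refine (h_int2.const_mul ((Real.sqrt (2*π))⁻¹)).congr (Filter.EventuallyEq.of_eq ?_)
  funext x
  rw [hpdf01]
  ring

lemma integral_id_gauss : ∫ x, x ∂(gaussianReal 0 1) = 0 := by
  rw [gauss_integral]
  have : ∫ x, gaussianPDFReal 0 1 x * x
      = ∫ x, (Real.sqrt (2*π))⁻¹ * (x * Real.exp (-x^2/2)) := by
    congr 1; funext x; rw [hpdf01]; ring
  rw [this, integral_const_mul, hv1, mul_zero]

lemma integral_sq_gauss : ∫ x, x ^ 2 ∂(gaussianReal 0 1) = 1 := by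
  rw [gauss_integral]
  have : ∫ x, gaussianPDFReal 0 1 x * x ^ 2
      = ∫ x, (Real.sqrt (2*π))⁻¹ * (x^2 * Real.exp (-x^2/2)) := by
    congr 1; funext x; rw [hpdf01]; ring
  rw [this, integral_const_mul, hv2, inv_mul_cancel₀]
  positivity

lemma map_withDensity_equiv {α β : Type*} [MeasurableSpace α] [MeasurableSpace β]
    (E : α ≃ᵐ β) (μ : Measure α) (w : α → ℝ≥0∞) (hw : Measurable w) :
    Measure.map E (μ.withDensity w)
      = (Measure.map E μ).withDensity (fun y => w (E.symm y)) := by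
  ext s hs
  rw [Measure.map_apply E.measurable hs, withDensity_apply _ (E.measurable hs),
    withDensity_apply _ hs,
    setLIntegral_map hs
      (show Measurable fun y => w (E.symm y) from hw.comp E.symm.measurable) E.measurable]
  simp [MeasurableEquiv.symm_apply_apply]

noncomputable def shearEquiv (C c : ℝ) : (ℝ × ℝ × ℝ) ≃ᵐ (ℝ × ℝ × ℝ) where
  toFun p := (p.1, C * p.1 + p.2.1, c * (C * p.1 + p.2.1) + p.2.2)
  invFun q := (q.1, q.2.1 - C * q.1, q.2.2 - c * q.2.1)
  left_inv p := by
    obtain ⟨x, y, z⟩ := p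
    simp only [Prod.mk.injEq]
    refine ⟨trivial, by ring, by ring⟩
  right_inv q := by
    obtain ⟨x, y, z⟩ := q
    simp only [Prod.mk.injEq]
    refine ⟨trivial, by ring, by ring⟩
  measurable_toFun := by dsimp; fun_prop
  measurable_invFun := by dsimp; fun_prop

section Moments

variable (a C : ℝ)

lemma i1 : Integrable (fun q : ℝ × ℝ => q.2) ((gaussianReal 0 1).prod (gaussianReal 0 1)) := by
  simpa using (integrable_const (1:ℝ)).mul_prod integrable_id_gauss

lemma i2 : Integrable (fun q : ℝ × ℝ => q.1 * q.2)
    ((gaussianReal 0 1).prod (gaussianReal 0 1)) :=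
  integrable_id_gauss.mul_prod integrable_id_gauss

lemma i3 : Integrable (fun q : ℝ × ℝ => q.1) ((gaussianReal 0 1).prod (gaussianReal 0 1)) := by
  simpa using integrable_id_gauss.mul_prod (integrable_const (1:ℝ))

lemma i4 : Integrable (fun q : ℝ × ℝ => q.1 ^ 2)
    ((gaussianReal 0 1).prod (gaussianReal 0 1)) := by
  simpa using integrable_sq_gauss.mul_prod (integrable_const (1:ℝ))

lemma j1 : Integrable (fun p : ℝ × ℝ × ℝ => p.1 * p.2.2)
    ((gaussianReal 0 1).prod ((gaussianReal 0 1).prod (gaussianReal 0 1))) :=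
  integrable_id_gauss.mul_prod i1

lemma j2 : Integrable (fun p : ℝ × ℝ × ℝ => p.2.1 * p.2.2)
    ((gaussianReal 0 1).prod ((gaussianReal 0 1).prod (gaussianReal 0 1))) := by
  simpa using (integrable_const (1:ℝ)).mul_prod i2

lemma j3 : Integrable (fun p : ℝ × ℝ × ℝ => p.1 ^ 2)
    ((gaussianReal 0 1).prod ((gaussianReal 0 1).prod (gaussianReal 0 1))) := by
  simpa using integrable_sq_gauss.mul_prod
    (integrable_const (1:ℝ) : Integrable _ ((gaussianReal 0 1).prod (gaussianReal 0 1)))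

lemma j4 : Integrable (fun p : ℝ × ℝ × ℝ => p.1 * p.2.1)
    ((gaussianReal 0 1).prod ((gaussianReal 0 1).prod (gaussianReal 0 1))) :=
  integrable_id_gauss.mul_prod i3

lemma j5 : Integrable (fun p : ℝ × ℝ × ℝ => p.2.1 ^ 2)
    ((gaussianReal 0 1).prod ((gaussianReal 0 1).prod (gaussianReal 0 1))) := by
  simpa using (integrable_const (1:ℝ)).mul_prod i4

lemma integrable_F : Integrable (fun p : ℝ × ℝ × ℝ =>
      a * (p.1 - C * p.2.1) * p.2.2 + (a * (p.1 - C * p.2.1)) ^ 2 / 2)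
    ((gaussianReal 0 1).prod ((gaussianReal 0 1).prod (gaussianReal 0 1))) := by
  have h : Integrable (fun p : ℝ × ℝ × ℝ =>
      (a * (p.1 * p.2.2) - (a*C) * (p.2.1 * p.2.2))
      + (((a^2/2) * p.1 ^ 2 - (a^2*C) * (p.1 * p.2.1)) + (a^2*C^2/2) * p.2.1 ^ 2))
      ((gaussianReal 0 1).prod ((gaussianReal 0 1).prod (gaussianReal 0 1))) :=
    (((j1.const_mul a).sub (j2.const_mul (a*C))).add
      (((j3.const_mul (a^2/2)).sub (j4.const_mul (a^2*C))).add (j5.const_mul (a^2*C^2/2))))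
  refine h.congr (Filter.EventuallyEq.of_eq ?_)
  funext p
  ring

lemma v1 : ∫ p : ℝ × ℝ × ℝ, p.1 * p.2.2
    ∂((gaussianReal 0 1).prod ((gaussianReal 0 1).prod (gaussianReal 0 1))) = 0 := by
  rw [show (∫ p : ℝ × ℝ × ℝ, p.1 * p.2.2
      ∂((gaussianReal 0 1).prod ((gaussianReal 0 1).prod (gaussianReal 0 1))))
    = (∫ x : ℝ, x ∂(gaussianReal 0 1))
      * ∫ q : ℝ × ℝ, q.2 ∂((gaussianReal 0 1).prod (gaussianReal 0 1)) from
    integral_prod_mul (fun x : ℝ => x) (fun q : ℝ × ℝ => q.2), integral_id_gauss, zero_mul]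

lemma v2 : ∫ p : ℝ × ℝ × ℝ, p.2.1 * p.2.2
    ∂((gaussianReal 0 1).prod ((gaussianReal 0 1).prod (gaussianReal 0 1))) = 0 := by
  rw [show (∫ p : ℝ × ℝ × ℝ, p.2.1 * p.2.2
      ∂((gaussianReal 0 1).prod ((gaussianReal 0 1).prod (gaussianReal 0 1))))
    = (∫ x : ℝ, (1:ℝ) ∂(gaussianReal 0 1))
      * ∫ q : ℝ × ℝ, q.1 * q.2 ∂((gaussianReal 0 1).prod (gaussianReal 0 1)) by
      simpa using integral_prod_mul (μ := gaussianReal 0 1)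
        (ν := (gaussianReal 0 1).prod (gaussianReal 0 1))
        (fun _ : ℝ => (1:ℝ)) (fun q : ℝ × ℝ => q.1 * q.2)]
  rw [show (∫ q : ℝ × ℝ, q.1 * q.2 ∂((gaussianReal 0 1).prod (gaussianReal 0 1)))
    = (∫ x : ℝ, x ∂(gaussianReal 0 1)) * ∫ x : ℝ, x ∂(gaussianReal 0 1) from
    integral_prod_mul (fun x : ℝ => x) (fun x : ℝ => x), integral_id_gauss, zero_mul, mul_zero]

lemma v3 : ∫ p : ℝ × ℝ × ℝ, p.1 ^ 2
    ∂((gaussianReal 0 1).prod ((gaussianReal 0 1).prod (gaussianReal 0 1))) = 1 := by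
  rw [show (∫ p : ℝ × ℝ × ℝ, p.1 ^ 2
      ∂((gaussianReal 0 1).prod ((gaussianReal 0 1).prod (gaussianReal 0 1))))
    = (∫ x : ℝ, x ^ 2 ∂(gaussianReal 0 1))
      * ∫ q : ℝ × ℝ, (1:ℝ) ∂((gaussianReal 0 1).prod (gaussianReal 0 1)) by
      simpa using integral_prod_mul (μ := gaussianReal 0 1)
        (ν := (gaussianReal 0 1).prod (gaussianReal 0 1))
        (fun x : ℝ => x ^ 2) (fun _ : ℝ × ℝ => (1:ℝ)), integral_sq_gauss]
  simp

lemma v4 : ∫ p : ℝ × ℝ × ℝ, p.1 * p.2.1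
    ∂((gaussianReal 0 1).prod ((gaussianReal 0 1).prod (gaussianReal 0 1))) = 0 := by
  rw [show (∫ p : ℝ × ℝ × ℝ, p.1 * p.2.1
      ∂((gaussianReal 0 1).prod ((gaussianReal 0 1).prod (gaussianReal 0 1))))
    = (∫ x : ℝ, x ∂(gaussianReal 0 1))
      * ∫ q : ℝ × ℝ, q.1 ∂((gaussianReal 0 1).prod (gaussianReal 0 1)) from
    integral_prod_mul (fun x : ℝ => x) (fun q : ℝ × ℝ => q.1), integral_id_gauss, zero_mul]

lemma v5 : ∫ p : ℝ × ℝ × ℝ, p.2.1 ^ 2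
    ∂((gaussianReal 0 1).prod ((gaussianReal 0 1).prod (gaussianReal 0 1))) = 1 := by
  rw [show (∫ p : ℝ × ℝ × ℝ, p.2.1 ^ 2
      ∂((gaussianReal 0 1).prod ((gaussianReal 0 1).prod (gaussianReal 0 1))))
    = (∫ x : ℝ, (1:ℝ) ∂(gaussianReal 0 1))
      * ∫ q : ℝ × ℝ, q.1 ^ 2 ∂((gaussianReal 0 1).prod (gaussianReal 0 1)) by
      simpa using integral_prod_mul (μ := gaussianReal 0 1)
        (ν := (gaussianReal 0 1).prod (gaussianReal 0 1))
        (fun _ : ℝ => (1:ℝ)) (fun q : ℝ × ℝ => q.1 ^ 2)]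
  rw [show (∫ q : ℝ × ℝ, q.1 ^ 2 ∂((gaussianReal 0 1).prod (gaussianReal 0 1)))
    = (∫ x : ℝ, x ^ 2 ∂(gaussianReal 0 1)) * ∫ x : ℝ, (1:ℝ) ∂(gaussianReal 0 1) by
      simpa using integral_prod_mul (μ := gaussianReal 0 1) (ν := gaussianReal 0 1)
        (fun x : ℝ => x ^ 2) (fun _ : ℝ => (1:ℝ)), integral_sq_gauss]
  simp

lemma integral_F : ∫ p : ℝ × ℝ × ℝ,
      (a * (p.1 - C * p.2.1) * p.2.2 + (a * (p.1 - C * p.2.1)) ^ 2 / 2)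
    ∂((gaussianReal 0 1).prod ((gaussianReal 0 1).prod (gaussianReal 0 1)))
    = a ^ 2 * (1 + C ^ 2) / 2 := by
  set γ := (gaussianReal 0 1).prod ((gaussianReal 0 1).prod (gaussianReal 0 1)) with hγ
  have hA : Integrable (fun p : ℝ × ℝ × ℝ =>
      a * (p.1 * p.2.2) - (a*C) * (p.2.1 * p.2.2)) γ :=
    (j1.const_mul a).sub (j2.const_mul (a*C))
  have hD : Integrable (fun p : ℝ × ℝ × ℝ =>
      (a^2/2) * p.1 ^ 2 - (a^2*C) * (p.1 * p.2.1)) γ :=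
    (j3.const_mul (a^2/2)).sub (j4.const_mul (a^2*C))
  have hG : Integrable (fun p : ℝ × ℝ × ℝ => (a^2*C^2/2) * p.2.1 ^ 2) γ :=
    j5.const_mul (a^2*C^2/2)
  have hB : Integrable (fun p : ℝ × ℝ × ℝ =>
      ((a^2/2) * p.1 ^ 2 - (a^2*C) * (p.1 * p.2.1)) + (a^2*C^2/2) * p.2.1 ^ 2) γ := hD.add hG
  have hsplit : (fun p : ℝ × ℝ × ℝ =>
      a * (p.1 - C * p.2.1) * p.2.2 + (a * (p.1 - C * p.2.1)) ^ 2 / 2)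
      = fun p : ℝ × ℝ × ℝ => (a * (p.1 * p.2.2) - (a*C) * (p.2.1 * p.2.2))
        + (((a^2/2) * p.1 ^ 2 - (a^2*C) * (p.1 * p.2.1)) + (a^2*C^2/2) * p.2.1 ^ 2) := by
    funext p; ring
  rw [hsplit, integral_add hA hB, integral_sub (j1.const_mul a) (j2.const_mul (a*C)),
    integral_add hD hG, integral_sub (j3.const_mul (a^2/2)) (j4.const_mul (a^2*C))]
  simp only [integral_const_mul]
  rw [v1, v2, v3, v4, v5]
  ring

end Moments


/-- The Kullback–Leibler divergence `KL(μ ‖ ν) = ∫ log(dμ/dν) dμ`, valued in `ℝ≥0∞`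
(`∞` unless `μ ≪ ν` and the log-likelihood ratio is `μ`-integrable). -/
noncomputable def klDiv {α : Type*} [MeasurableSpace α] (μ ν : Measure α) : ENNReal :=
  if μ ≪ ν ∧ Integrable (llr μ ν) μ then ENNReal.ofReal (∫ x, llr μ ν x ∂μ) else ⊤

/-- Let `μ` be the law of `(X, Y, Z)` for the triangle DAG
`X → Y` (weight `C`), `X → Z` (weight `b`), `Y → Z` (weight `b₁`) with unit-variance
noise, and `ν` the law of `(X', Y', Z')` for the chain DAG `X' → Y'` (weight `C`),
`Y' → Z'` (weight `c = b₁ + C·b/(1+C²)`). Then `KL(μ ‖ ν) = b²/(2(1+C²))`. -/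
theorem klDiv_triangle_vs_chain (b b₁ C : ℝ) (hb : 0 < b) (hb₁ : 0 < b₁) (hC : 0 < C) :
    klDiv
      (Measure.map
        (fun p : ℝ × ℝ × ℝ =>
          (p.1, C * p.1 + p.2.1, (b + C * b₁) * p.1 + b₁ * p.2.1 + p.2.2))
        ((gaussianReal 0 1).prod ((gaussianReal 0 1).prod (gaussianReal 0 1))))
      (Measure.map
        (fun p : ℝ × ℝ × ℝ =>
          (p.1, C * p.1 + p.2.1,
            (b₁ + C * b / (1 + C ^ 2)) * (C * p.1 + p.2.1) + p.2.2))
        ((gaussianReal 0 1).prod ((gaussianReal 0 1).prod (gaussianReal 0 1)))) =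
      ENNReal.ofReal (b ^ 2 / (2 * (1 + C ^ 2))) := by
  have hC2 : (0:ℝ) < 1 + C ^ 2 := by positivity
  set c : ℝ := b₁ + C * b / (1 + C ^ 2) with hc
  set a : ℝ := b / (1 + C ^ 2) with ha
  set γ : Measure (ℝ × ℝ × ℝ) :=
    (gaussianReal 0 1).prod ((gaussianReal 0 1).prod (gaussianReal 0 1)) with hγ
  set T₁ : ℝ × ℝ × ℝ → ℝ × ℝ × ℝ := fun p =>
    (p.1, C * p.1 + p.2.1, (b + C * b₁) * p.1 + b₁ * p.2.1 + p.2.2) with hT₁def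
  have hT₁ : Measurable T₁ := by rw [hT₁def]; fun_prop
  set E := shearEquiv C c with hE
  show klDiv (Measure.map T₁ γ) (Measure.map (⇑E) γ) = _
  set W : ℝ × ℝ × ℝ → ℝ≥0∞ := fun p =>
    ENNReal.ofReal (Real.exp (a * (p.1 - C * p.2.1) * p.2.2
      - (a * (p.1 - C * p.2.1)) ^ 2 / 2)) with hWdef
  have hW : Measurable W := by rw [hWdef]; fun_prop
  have key : Measure.map
      (fun p : ℝ × ℝ × ℝ => (p.1, p.2.1, p.2.2 + a * (p.1 - C * p.2.1))) γ
      = γ.withDensity W := by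
    have h := map_shear (fun q : ℝ × ℝ => a * (q.1 - C * q.2)) (by fun_prop)
    rw [hγ, hWdef]
    simpa using h
  set L : ℝ × ℝ × ℝ → ℝ := fun y => a * ((E.symm y).1 - C * (E.symm y).2.1) * (E.symm y).2.2
    - (a * ((E.symm y).1 - C * (E.symm y).2.1)) ^ 2 / 2 with hLdef
  have hLmeas : Measurable L := by
    rw [hLdef]
    have := E.symm.measurable
    fun_prop
  have hVW : (fun y => W (E.symm y)) = fun y => ENNReal.ofReal (Real.exp (L y)) := rfl
  have hμ : Measure.map T₁ γ
      = (Measure.map (⇑E) γ).withDensity (fun y => ENNReal.ofReal (Real.exp (L y))) := by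
    have hcompmap : Measure.map T₁ γ = Measure.map (⇑E)
        (Measure.map (fun p : ℝ × ℝ × ℝ => (p.1, p.2.1, p.2.2 + a * (p.1 - C * p.2.1))) γ) := by
      rw [Measure.map_map E.measurable (by fun_prop)]
      congr 1
      funext p
      simp only [Function.comp_apply, hE, shearEquiv, MeasurableEquiv.coe_mk, Equiv.coe_fn_mk,
        hT₁def, Prod.mk.injEq]
      refine ⟨trivial, trivial, ?_⟩
      rw [hc, ha]
      field_simp
      ring
    rw [hcompmap, key, map_withDensity_equiv E γ W hW, hVW]
  have hac : Measure.map T₁ γ ≪ Measure.map (⇑E) γ := by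
    rw [hμ]; exact withDensity_absolutelyContinuous _ _
  have hVmeas : Measurable (fun y => ENNReal.ofReal (Real.exp (L y))) := by fun_prop
  have hrn : (Measure.map T₁ γ).rnDeriv (Measure.map (⇑E) γ)
      =ᵐ[Measure.map (⇑E) γ] fun y => ENNReal.ofReal (Real.exp (L y)) := by
    rw [hμ]; exact Measure.rnDeriv_withDensity _ hVmeas
  have hrnμ := hrn.filter_mono hac.ae_le
  have hllr : llr (Measure.map T₁ γ) (Measure.map (⇑E) γ) =ᵐ[Measure.map T₁ γ] L := by
    filter_upwards [hrnμ] with x hx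
    rw [llr, hx, ENNReal.toReal_ofReal (Real.exp_nonneg _), Real.log_exp]
  have hcomp : (fun p : ℝ × ℝ × ℝ => L (T₁ p))
      = fun p : ℝ × ℝ × ℝ => (a * (p.1 - C * p.2.1) * p.2.2
        + (a * (p.1 - C * p.2.1)) ^ 2 / 2) := by
    funext p
    have hsymm : E.symm (T₁ p) = ((T₁ p).1, (T₁ p).2.1 - C * (T₁ p).1,
        (T₁ p).2.2 - c * (T₁ p).2.1) := rfl
    rw [hLdef]
    simp only [hsymm]
    simp only [hT₁def]
    rw [hc, ha]
    field_simp
    ring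
  have hLint : Integrable L (Measure.map T₁ γ) := by
    rw [integrable_map_measure hLmeas.aestronglyMeasurable hT₁.aemeasurable]
    have hLT : L ∘ T₁ = fun p : ℝ × ℝ × ℝ => (a * (p.1 - C * p.2.1) * p.2.2
        + (a * (p.1 - C * p.2.1)) ^ 2 / 2) := by
      funext p
      simpa using congrFun hcomp p
    rw [hLT, hγ]
    exact integrable_F a C
  have hllrint : Integrable (llr (Measure.map T₁ γ) (Measure.map (⇑E) γ)) (Measure.map T₁ γ) :=
    hLint.congr hllr.symm
  have hIval : ∫ x, llr (Measure.map T₁ γ) (Measure.map (⇑E) γ) x ∂(Measure.map T₁ γ)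
      = b ^ 2 / (2 * (1 + C ^ 2)) := by
    rw [integral_congr_ae hllr, integral_map hT₁.aemeasurable hLmeas.aestronglyMeasurable]
    rw [show (∫ p, L (T₁ p) ∂γ) = ∫ p : ℝ × ℝ × ℝ, (a * (p.1 - C * p.2.1) * p.2.2
        + (a * (p.1 - C * p.2.1)) ^ 2 / 2) ∂γ from by rw [← hcomp]]
    rw [hγ, integral_F a C, ha]
    field_simp
  rw [klDiv, if_pos ⟨hac, hllrint⟩, hIval]
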